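/- In the instance with 3 agents and 9 items where agents 1 and 2 value item o_k at 10−k and agent 3 values (o_1,...,o_9) at (6,9,8,7,5,4,3,2,1), if the allocation is additionally required to be balanced (each agent gets exactly 3 items), then still no utilitarian-maximal balanced allocation is EF1. -/
import Mathlib


open Finset

/-- Utilities of the 3 agents over 9 items: agents 1,2 value item `o_k` at `10-k`;
agent 3 values the items at `6,9,8,7,5,4,3,2,1`. -/
noncomputable def u5 : Fin 3 → Fin 9 → ℝ :=
  ![fun k => 9 - (k.val : ℝ), fun k => 9 - (k.val : ℝ), ![6, 9, 8, 7, 5, 4, 3, 2, 1]]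

/-- The bundle of agent `i` under allocation `p` (each item to exactly one agent). -/
def bundle5 (p : Fin 9 → Fin 3) (i : Fin 3) : Finset (Fin 9) :=
  Finset.univ.filter (fun o => p o = i)

/-- A balanced allocation gives each agent exactly 3 items. -/
def Balanced5 (p : Fin 9 → Fin 3) : Prop := ∀ i : Fin 3, (bundle5 p i).card = 3

/-- Utilitarian welfare of an allocation. -/
noncomputable def welf5 (p : Fin 9 → Fin 3) : ℝ := ∑ o, u5 (p o) o

/-- EF1: for all agents `i, j`, removing at most one item from `j`'s bundle eliminates
`i`'s envy towards `j`. -/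
def EF1_5 (p : Fin 9 → Fin 3) : Prop :=
  ∀ i j : Fin 3, ∃ O' ⊆ bundle5 p j, O'.card ≤ 1 ∧
    ∑ o ∈ bundle5 p j \ O', u5 i o ≤ ∑ o ∈ bundle5 p i, u5 i o

noncomputable def e5 : Fin 9 → ℝ := ![-3, 1, 1, 1, 0, 0, 0, 0, 0]

lemma h2 : ∀ o : Fin 9, u5 2 o = u5 0 o + e5 o := by
  intro o
  fin_cases o
  · show (6:ℝ) = 9 - ((0:ℕ):ℝ) + (-3); norm_num
  · show (9:ℝ) = 9 - ((1:ℕ):ℝ) + 1; norm_num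
  · show (8:ℝ) = 9 - ((2:ℕ):ℝ) + 1; norm_num
  · show (7:ℝ) = 9 - ((3:ℕ):ℝ) + 1; norm_num
  · show (5:ℝ) = 9 - ((4:ℕ):ℝ) + 0; norm_num
  · show (4:ℝ) = 9 - ((5:ℕ):ℝ) + 0; norm_num
  · show (3:ℝ) = 9 - ((6:ℕ):ℝ) + 0; norm_num
  · show (2:ℝ) = 9 - ((7:ℕ):ℝ) + 0; norm_num
  · show (1:ℝ) = 9 - ((8:ℕ):ℝ) + 0; norm_num

lemma h3 : ∀ i : Fin 3, i = 0 ∨ i = 1 ∨ i = 2 := by decide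

lemma sum_univ_u0 : ∑ o : Fin 9, u5 0 o = 45 := by
  simp [u5, Fin.sum_univ_succ]; norm_num

lemma welf_formula (p : Fin 9 → Fin 3) : welf5 p = 45 + ∑ o ∈ bundle5 p 2, e5 o := by
  have key : ∀ o, u5 (p o) o = u5 0 o + if p o = 2 then e5 o else 0 := by
    intro o
    rcases h3 (p o) with h | h | h <;> rw [h]
    · simp
    · have : u5 1 o = u5 0 o := rfl; simp [this]
    · simp [h2 o]
  calc welf5 p = ∑ o, (u5 0 o + if p o = 2 then e5 o else 0) :=
        Finset.sum_congr rfl fun o _ => key o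
    _ = (∑ o, u5 0 o) + ∑ o, (if p o = 2 then e5 o else 0) := Finset.sum_add_distrib
    _ = 45 + ∑ o ∈ bundle5 p 2, e5 o := by
        unfold bundle5; rw [← Finset.sum_filter, sum_univ_u0]

lemma welf_q : welf5 ![0,2,2,2,0,0,1,1,1] = 48 := by
  simp [welf5, Fin.sum_univ_succ, u5]; norm_num

lemma bal_q : Balanced5 ![0,2,2,2,0,0,1,1,1] := by
  show ∀ i : Fin 3, _ ; decide

lemma sum_123 : ∑ o ∈ ({1,2,3} : Finset (Fin 9)), u5 0 o = 21 := by
  rw [show ({1,2,3} : Finset (Fin 9)) = insert 1 (insert 2 {3}) from rfl,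
    Finset.sum_insert (by decide), Finset.sum_insert (by decide), Finset.sum_singleton]
  show 9 - ((1:ℕ):ℝ) + (9 - ((2:ℕ):ℝ) + (9 - ((3:ℕ):ℝ))) = 21
  norm_num

/-- In this instance no utilitarian-maximal balanced allocation is EF1. -/
theorem stmt5 :
    ∀ p : Fin 9 → Fin 3, Balanced5 p →
      (∀ q : Fin 9 → Fin 3, Balanced5 q → welf5 q ≤ welf5 p) → ¬ EF1_5 p := by
  intro p hbal hopt hEF1
  have h48 : (48:ℝ) ≤ welf5 p := welf_q ▸ hopt _ bal_q
  have hsum3 : (3:ℝ) ≤ ∑ o ∈ bundle5 p 2, e5 o := by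
    have := welf_formula p; linarith
  have he1 : ∀ o : Fin 9, o ∉ ({1,2,3} : Finset (Fin 9)) → e5 o < 1 := by
    intro o ho
    fin_cases o
    · show (-3:ℝ) < 1; norm_num
    · exact absurd (by decide) ho
    · exact absurd (by decide) ho
    · exact absurd (by decide) ho
    all_goals show (0:ℝ) < 1; norm_num
  have he_le : ∀ o : Fin 9, e5 o ≤ 1 := by
    intro o
    fin_cases o
    · show (-3:ℝ) ≤ 1; norm_num
    · show (1:ℝ) ≤ 1; norm_num
    · show (1:ℝ) ≤ 1; norm_num
    · show (1:ℝ) ≤ 1; norm_num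
    all_goals show (0:ℝ) ≤ 1; norm_num
  have hsub : bundle5 p 2 ⊆ ({1,2,3} : Finset (Fin 9)) := by
    by_contra hc
    obtain ⟨o, hoB, hoN⟩ := not_subset.mp hc
    have hlt : ∑ o ∈ bundle5 p 2, e5 o < ∑ o ∈ bundle5 p 2, (1:ℝ) :=
      Finset.sum_lt_sum (fun i _ => he_le i) ⟨o, hoB, he1 o hoN⟩
    rw [Finset.sum_const, hbal 2, nsmul_eq_mul] at hlt
    norm_num at hlt
    linarith
  have hB2 : bundle5 p 2 = ({1,2,3} : Finset (Fin 9)) :=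
    Finset.eq_of_subset_of_card_le hsub (by rw [hbal 2]; decide)
  have hval : ∀ o : Fin 9, o ∈ ({1,2,3} : Finset (Fin 9)) → u5 0 o ≤ 8 := by
    intro o ho
    fin_cases o
    · exact absurd ho (by decide)
    · show 9 - ((1:ℕ):ℝ) ≤ 8; norm_num
    · show 9 - ((2:ℕ):ℝ) ≤ 8; norm_num
    · show 9 - ((3:ℕ):ℝ) ≤ 8; norm_num
    all_goals exact absurd ho (by decide)
  have main : ∀ i : Fin 3, u5 i = u5 0 → (13:ℝ) ≤ ∑ o ∈ bundle5 p i, u5 0 o := by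
    intro i hu
    obtain ⟨O', hOsub, hOcard, hle⟩ := hEF1 i 2
    rw [hB2, hu] at hle
    rw [hB2] at hOsub
    rw [Finset.sum_sdiff_eq_sub hOsub, sum_123] at hle
    have hO8 : ∑ o ∈ O', u5 0 o ≤ 8 := by
      have h1 : ∑ o ∈ O', u5 0 o ≤ O'.card • (8:ℝ) :=
        Finset.sum_le_card_nsmul O' _ 8 (fun o ho => hval o (hOsub ho))
      rw [nsmul_eq_mul] at h1
      have h2 : (O'.card : ℝ) ≤ 1 := by exact_mod_cast hOcard
      nlinarith [h1, h2]
    linarith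
  have hdisj : Disjoint (bundle5 p 0) (bundle5 p 1) := by
    rw [Finset.disjoint_left]
    intro o h0 h1
    simp [bundle5] at h0 h1
    rw [h0] at h1
    exact absurd h1 (by decide)
  have hU : bundle5 p 0 ∪ bundle5 p 1 = Finset.univ \ ({1,2,3} : Finset (Fin 9)) := by
    ext o
    rw [← hB2]
    simp only [Finset.mem_union, Finset.mem_sdiff, Finset.mem_univ, true_and, bundle5,
      Finset.mem_filter]
    rcases h3 (p o) with hh | hh | hh <;> simp [hh, Fin.ext_iff]
  have hsum01 : ∑ o ∈ bundle5 p 0, u5 0 o + ∑ o ∈ bundle5 p 1, u5 0 o = 24 := by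
    rw [← Finset.sum_union hdisj, hU,
      Finset.sum_sdiff_eq_sub (Finset.subset_univ _), sum_123, sum_univ_u0]
    norm_num
  have m0 := main 0 rfl
  have m1 := main 1 rfl
  linarith
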